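/- arXiv:1603.00129 — 10 statements merged into one kernel-verified Lean document; each statement's English description precedes it below -/
import Mathlib

section
/- Let A and B be finite partial orders and γ : A → B a covering map. For every covering chain b₁ ≺ b₂ ≺ ⋯ ≺ b_n in B with b_n maximal in B, there exists a covering chain a₁ ≺ a₂ ≺ ⋯ ≺ a_n in A with a_n maximal in A and γ(a_i) = b_i for all i. -/
/-- A covering map between finite partial orders. -/
def IsCoveringMap' {A B : Type*} [PartialOrder A] [PartialOrder B] (γ : A → B) : Prop :=
  Set.BijOn γ {a : A | IsMax a} {b : B | IsMax b} ∧
    ∀ a : A, Set.BijOn γ {c : A | c ⋖ a} {c : B | c ⋖ γ a}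

theorem exists_covBy_chain_lift {A B : Type*} [Preorder A] [Preorder B] (γ : A → B)
    (hγ : ∀ a : A, Set.SurjOn γ {c : A | c ⋖ a} {c : B | c ⋖ γ a}) (n : ℕ)
    (b : Fin (n + 1) → B) (hchain : ∀ i : Fin n, b i.castSucc ⋖ b i.succ) (a : A)
    (ha : γ a = b (Fin.last n)) :
    ∃ a' : Fin (n + 1) → A,
      (∀ i : Fin n, a' i.castSucc ⋖ a' i.succ) ∧ a' (Fin.last n) = a ∧
        ∀ i : Fin (n + 1), γ (a' i) = b i := by
  induction n with
  | zero => exact ⟨fun _ => a, finZeroElim, rfl, fun i => by rwa [Fin.fin_one_eq_zero i]⟩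
  | succ n ih =>
    obtain ⟨a', hchain', hlast, hlift⟩ :=
      ih (b ∘ Fin.succ) (fun i => by simpa [← Fin.succ_castSucc] using hchain i.succ) ha
    have hb₀ : b 0 ⋖ γ (a' 0) := hlift 0 ▸ hchain 0
    obtain ⟨c, hc, hγc⟩ := hγ (a' 0) hb₀
    refine ⟨Fin.cons c a', fun i => ?_, by rw [← Fin.succ_last, Fin.cons_succ, hlast], fun i => ?_⟩
    · cases i using Fin.cases with
      | zero => exact hc
      | succ j => simpa [← Fin.succ_castSucc] using hchain' j
    · cases i using Fin.cases with
      | zero => exact hγc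
      | succ j => exact hlift j

theorem stmt_3_general {A B : Type*} [PartialOrder A] [PartialOrder B]
    (γ : A → B) (hγ : IsCoveringMap' γ) (n : ℕ) (b : Fin (n + 1) → B)
    (hchain : ∀ i : Fin n, b i.castSucc ⋖ b i.succ) (hmax : IsMax (b (Fin.last n))) :
    ∃ a : Fin (n + 1) → A,
      (∀ i : Fin n, a i.castSucc ⋖ a i.succ) ∧ IsMax (a (Fin.last n)) ∧
        ∀ i : Fin (n + 1), γ (a i) = b i := by
  obtain ⟨top, htop, hγtop⟩ := hγ.1.surjOn hmax
  obtain ⟨a, hchain', hlast, hlift⟩ :=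
    exists_covBy_chain_lift γ (fun a => (hγ.2 a).surjOn) n b hchain top hγtop
  exact ⟨a, hchain', hlast ▸ htop, hlift⟩

/-- Every covering chain in `B` ending at a maximal element lifts along a covering map `γ`
to a covering chain in `A` ending at a maximal element. -/
theorem stmt_3 {A B : Type*} [PartialOrder A] [PartialOrder B] [Fintype A] [Fintype B]
    (γ : A → B) (hγ : IsCoveringMap' γ) (n : ℕ) (b : Fin (n + 1) → B)
    (hchain : ∀ i : Fin n, b i.castSucc ⋖ b i.succ) (hmax : IsMax (b (Fin.last n))) :
    ∃ a : Fin (n + 1) → A,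
      (∀ i : Fin n, a i.castSucc ⋖ a i.succ) ∧ IsMax (a (Fin.last n)) ∧
        ∀ i : Fin (n + 1), γ (a i) = b i :=
  stmt_3_general γ hγ n b hchain hmax
end

section
/- Let A and B be finite nonempty partial orders and γ : A → B a covering map. Then γ is a quotient map: for all b₁ ≤ b₂ in B there exist a₁ ≤ a₂ in A with γ(a₁) = b₁ and γ(a₂) = b₂. In particular γ is surjective. -/
namespace IsCoveringMap'

variable {A B : Type*} [PartialOrder A] [PartialOrder B] {γ : A → B}

theorem exists_le_map_eq_of_le_map [LocallyFiniteOrder B] (hγ : IsCoveringMap' γ) {a : A} {b : B}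
    (hb : b ≤ γ a) : ∃ a' ≤ a, γ a' = b := by
  have hchain := le_iff_reflTransGen_covBy.mp hb
  clear hb
  induction hchain using Relation.ReflTransGen.head_induction_on with
  | refl => exact ⟨a, le_rfl, rfl⟩
  | head hbc _ ih =>
    obtain ⟨a', ha', rfl⟩ := ih
    obtain ⟨a'', ha''a', rfl⟩ := (hγ.2 a').surjOn hbc
    exact ⟨a'', ha''a'.le.trans ha', rfl⟩

theorem exists_le_map [Finite B] (hγ : IsCoveringMap' γ) (b : B) : ∃ a, b ≤ γ a := by
  obtain ⟨m, hbm, hm⟩ := Finite.exists_le_maximal (p := fun _ : B => True) trivial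
  obtain ⟨a, -, rfl⟩ := hγ.1.surjOn (show IsMax m from fun _ h => hm.2 trivial h)
  exact ⟨a, hbm⟩

theorem exists_lift_of_le [Fintype B] (hγ : IsCoveringMap' γ) {b₁ b₂ : B} (hb : b₁ ≤ b₂) :
    ∃ a₁ a₂ : A, a₁ ≤ a₂ ∧ γ a₁ = b₁ ∧ γ a₂ = b₂ := by
  classical
  let := Fintype.toLocallyFiniteOrder (α := B)
  obtain ⟨a, hb₂a⟩ := hγ.exists_le_map b₂
  obtain ⟨a₂, -, rfl⟩ := hγ.exists_le_map_eq_of_le_map hb₂a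
  obtain ⟨a₁, ha₁, rfl⟩ := hγ.exists_le_map_eq_of_le_map hb
  exact ⟨a₁, a₂, ha₁, rfl, rfl⟩

end IsCoveringMap'

theorem stmt_4_general {A B : Type*} [PartialOrder A] [PartialOrder B] [Fintype B]
    (γ : A → B) (hγ : IsCoveringMap' γ) :
    (∀ b₁ b₂ : B, b₁ ≤ b₂ → ∃ a₁ a₂ : A, a₁ ≤ a₂ ∧ γ a₁ = b₁ ∧ γ a₂ = b₂) ∧
      Function.Surjective γ := by
  refine ⟨fun _ _ => hγ.exists_lift_of_le, fun b => ?_⟩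
  obtain ⟨a, -, -, h, -⟩ := hγ.exists_lift_of_le (le_refl b)
  exact ⟨a, h⟩

/-- A covering map between finite nonempty partial orders is a quotient map (and hence
surjective): for all `b₁ ≤ b₂` in `B` there exist `a₁ ≤ a₂` in `A` mapped to them. -/
theorem stmt_4 {A B : Type*} [PartialOrder A] [PartialOrder B] [Fintype A] [Fintype B]
    [Nonempty A] [Nonempty B] (γ : A → B) (hγ : IsCoveringMap' γ) :
    (∀ b₁ b₂ : B, b₁ ≤ b₂ → ∃ a₁ a₂ : A, a₁ ≤ a₂ ∧ γ a₁ = b₁ ∧ γ a₂ = b₂) ∧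
      Function.Surjective γ :=
  stmt_4_general γ hγ
end

section
/- Let P be a finite partial order and F its covering forest (words a₁⋯a_n forming covering chains ending at a maximal element, ordered by final-segment). Then the map φ : F → P sending a₁a₂⋯a_n to a₁ is a covering map; in particular, it is an order-preserving surjection. -/
/-!
A word is its first letter `φ w` followed by its tail, and a nonempty suffix of a word is again a
word. Since `w ≤ v` means that `v` is a suffix of `w`, the lower covers of `w` are exactly the
words `a :: w` with `a ⋖ φ w`, and the maximal words are the one-letter words `[p]` with `p`
maximal. A word is a strictly increasing chain, so `φ w` is its least letter, which gives
monotonicity. Surjectivity follows by well-founded induction downwards from the maximal elements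
of the finite poset `P`, prepending a lower cover at each step.
-/

def CoveringForest (P : Type*) [PartialOrder P] : Type _ :=
  {l : List P // l ≠ [] ∧ l.Chain' (· ⋖ ·) ∧ ∀ x, l.getLast? = some x → IsMax x}

instance forestOrder (P : Type*) [PartialOrder P] : PartialOrder (CoveringForest P) where
  le w v := v.1 <:+ w.1
  le_refl w := List.suffix_refl _
  le_trans _ _ _ h₁ h₂ := List.IsSuffix.trans h₂ h₁
  le_antisymm _ _ h₁ h₂ := Subtype.ext (h₂.sublist.antisymm h₁.sublist)

def forestPhi {P : Type*} [PartialOrder P] (w : CoveringForest P) : P :=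
  w.1.head w.2.1

namespace CoveringForest

variable {P : Type*} [PartialOrder P]

lemma val_eq_cons_tail (w : CoveringForest P) : w.1 = forestPhi w :: w.1.tail :=
  (List.cons_head_tail w.2.1).symm

def ofSuffix (w : CoveringForest P) (l : List P) (hl : l ≠ []) (h : l <:+ w.1) :
    CoveringForest P :=
  ⟨l, hl, w.2.2.1.suffix h, fun x hx => w.2.2.2 x <| by
    obtain ⟨pre, hpre⟩ := h
    rwa [← hpre, List.getLast?_append_of_ne_nil _ hl]⟩

lemma le_ofSuffix (w : CoveringForest P) (l : List P) (hl : l ≠ []) (h : l <:+ w.1) :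
    w ≤ ofSuffix w l hl h :=
  h

def cons (w : CoveringForest P) (a : P) (h : a ⋖ forestPhi w) : CoveringForest P :=
  ⟨a :: w.1, List.cons_ne_nil _ _,
    List.isChain_cons.mpr
      ⟨by simpa [List.head?_eq_some_head w.2.1, forestPhi] using h, w.2.2.1⟩,
    fun x hx => w.2.2.2 x <| by
      rwa [← List.singleton_append, List.getLast?_append_of_ne_nil _ w.2.1] at hx⟩

def single (p : P) (hp : IsMax p) : CoveringForest P :=
  ⟨[p], List.cons_ne_nil _ _, List.isChain_singleton _, by simpa using hp⟩

lemma tail_ne_val (w : CoveringForest P) : w.1.tail ≠ w.1 := fun h => by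
  have hlen := congrArg List.length h
  have := List.length_pos_of_ne_nil w.2.1
  rw [List.length_tail] at hlen
  omega

lemma suffix_tail_of_lt {c w : CoveringForest P} (h : c < w) : w.1 <:+ c.1.tail := by
  have hsuf : w.1 <:+ c.1 := h.le
  rw [val_eq_cons_tail c, List.suffix_cons_iff, ← val_eq_cons_tail c] at hsuf
  exact hsuf.resolve_left fun heq => h.ne' (Subtype.ext heq)

lemma covBy_iff_tail_eq {c w : CoveringForest P} : c ⋖ w ↔ c.1.tail = w.1 := by
  constructor
  · intro h
    have hsuf := suffix_tail_of_lt h.lt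
    have htail_ne : c.1.tail ≠ [] := fun he =>
      w.2.1 (List.eq_nil_of_suffix_nil (by rwa [he] at hsuf))
    rcases h.eq_or_eq (le_ofSuffix c c.1.tail htail_ne (List.tail_suffix _)) hsuf with hmc | hmw
    · exact absurd (congrArg Subtype.val hmc) (tail_ne_val c)
    · exact congrArg Subtype.val hmw
  · intro h
    have hle : w.1 <:+ c.1 := h ▸ List.tail_suffix c.1
    have hlt : c < w := lt_of_le_of_ne hle fun hcw => tail_ne_val c (hcw ▸ h)
    refine ⟨hlt, fun m hcm hmw => hmw.ne (Subtype.ext ?_)⟩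
    exact (h ▸ suffix_tail_of_lt hcm).sublist.antisymm hmw.le.sublist

lemma cons_covBy (w : CoveringForest P) (a : P) (h : a ⋖ forestPhi w) : cons w a h ⋖ w :=
  covBy_iff_tail_eq.mpr rfl

lemma val_eq_cons_of_covBy {c w : CoveringForest P} (h : c ⋖ w) : c.1 = forestPhi c :: w.1 := by
  rw [← covBy_iff_tail_eq.mp h, ← val_eq_cons_tail]

lemma isMax_iff_tail_eq_nil {w : CoveringForest P} : IsMax w ↔ w.1.tail = [] := by
  constructor
  · intro hw
    by_contra htail
    have hle := le_ofSuffix w w.1.tail htail (List.tail_suffix _)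
    have heq : w = ofSuffix w w.1.tail htail (List.tail_suffix _) := le_antisymm hle (hw hle)
    exact tail_ne_val w (congrArg Subtype.val heq).symm
  · intro htail v hwv
    have hw : w.1 = [forestPhi w] := by rw [val_eq_cons_tail w, htail]
    have hsuf : v.1 <:+ [forestPhi w] := by rw [← hw]; exact hwv
    rcases List.suffix_cons_iff.mp hsuf with heq | hnil
    · exact le_of_eq (Subtype.ext (heq.trans hw.symm))
    · exact absurd (List.eq_nil_of_suffix_nil hnil) v.2.1

lemma isMax_single (p : P) (hp : IsMax p) : IsMax (single p hp) :=
  isMax_iff_tail_eq_nil.mpr rfl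

lemma val_eq_singleton_of_isMax {w : CoveringForest P} (hw : IsMax w) : w.1 = [forestPhi w] := by
  rw [val_eq_cons_tail w, isMax_iff_tail_eq_nil.mp hw]

end CoveringForest

section

open CoveringForest

variable {P : Type*} [PartialOrder P]

lemma forestPhi_le_of_mem {w : CoveringForest P} {x : P} (hx : x ∈ w.1) : forestPhi w ≤ x := by
  have hsorted : w.1.Pairwise (· < ·) :=
    List.isChain_iff_pairwise.mp (w.2.2.1.imp fun _ _ h => h.lt)
  rw [val_eq_cons_tail w, List.pairwise_cons] at hsorted
  rw [val_eq_cons_tail w, List.mem_cons] at hx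
  rcases hx with rfl | hx
  · exact le_rfl
  · exact (hsorted.1 x hx).le

lemma forestPhi_covBy {c w : CoveringForest P} (h : c ⋖ w) : forestPhi c ⋖ forestPhi w := by
  have hchain := c.2.2.1
  rw [val_eq_cons_of_covBy h] at hchain
  exact (List.isChain_cons.mp hchain).1 _ (List.head?_eq_some_head w.2.1)

lemma isMax_forestPhi {w : CoveringForest P} (hw : IsMax w) : IsMax (forestPhi w) :=
  w.2.2.2 _ (by rw [val_eq_singleton_of_isMax hw, List.getLast?_singleton])

lemma forestPhi_monotone : Monotone (forestPhi (P := P)) := fun _ v hwv =>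
  forestPhi_le_of_mem (hwv.mem (List.head_mem v.2.1))

lemma forestPhi_surjective [Finite P] : Function.Surjective (forestPhi (P := P)) := by
  intro p
  induction p using WellFoundedGT.induction with
  | _ p ih =>
    by_cases hp : IsMax p
    · exact ⟨single p hp, rfl⟩
    · obtain ⟨q, hpq⟩ := not_isMax_iff.mp hp
      obtain ⟨r, hpr, -⟩ := exists_covBy_le_of_lt hpq
      obtain ⟨w, rfl⟩ := ih r hpr.lt
      exact ⟨cons w p hpr, rfl⟩

lemma forestPhi_bijOn_isMax :
    Set.BijOn (forestPhi (P := P)) {w | IsMax w} {p : P | IsMax p} := by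
  refine ⟨fun w hw => isMax_forestPhi hw, fun w hw v hv he => ?_, fun p hp => ?_⟩
  · exact Subtype.ext (by rw [val_eq_singleton_of_isMax hw, val_eq_singleton_of_isMax hv, he])
  · exact ⟨single p hp, isMax_single p hp, rfl⟩

lemma forestPhi_bijOn_covBy (w : CoveringForest P) :
    Set.BijOn forestPhi {c | c ⋖ w} {c : P | c ⋖ forestPhi w} := by
  refine ⟨fun c hc => forestPhi_covBy hc, fun c hc c' hc' he => ?_, fun a ha => ?_⟩
  · exact Subtype.ext (by rw [val_eq_cons_of_covBy hc, val_eq_cons_of_covBy hc', he])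
  · exact ⟨cons w a ha, cons_covBy w a ha, rfl⟩

end

/-- The natural map from the covering forest to `P` is a covering map; in particular, it is
an order-preserving surjection. -/
theorem stmt_6 (P : Type*) [PartialOrder P] [Fintype P] :
    (Set.BijOn (forestPhi (P := P)) {w | IsMax w} {p : P | IsMax p} ∧
      ∀ w : CoveringForest P,
        Set.BijOn forestPhi {c | c ⋖ w} {c : P | c ⋖ forestPhi w}) ∧
    Monotone (forestPhi (P := P)) ∧ Function.Surjective (forestPhi (P := P)) :=
  ⟨⟨forestPhi_bijOn_isMax, forestPhi_bijOn_covBy⟩, forestPhi_monotone, forestPhi_surjective⟩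
end

section
/- Let P be a finite partial order, F its covering forest with covering map φ : F → P, and u, v ∈ F with φ(u) = φ(v). Then the map μ : ↓u → ↓v defined by μ(su) = sv (replacing the final segment u by v) is a well-defined order-isomorphism between the principal down-sets ↓u and ↓v, and satisfies φ ∘ μ = φ restricted to ↓u. -/
/-!
A word `s ++ u` lies in the forest exactly when `s ++ [φ u]` is a covering chain: maximality
concerns only the last letter, which lies in `u`. So the admissible prefixes `s` depend on `u`
only through `φ u`, and the prefix order is unchanged when the common suffix `u` is replaced by `v`.
-/

theorem List.IsChain.append_of_head?_eq {α : Type*} {R : α → α → Prop} {l l₁ l₂ : List α}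
    (h : (l ++ l₁).IsChain R) (h₂ : l₂.IsChain R) (he : l₁.head? = l₂.head?) :
    (l ++ l₂).IsChain R := by
  rw [List.isChain_append] at h ⊢
  exact ⟨h.1, h₂, he ▸ h.2.2⟩

namespace CoveringForest

variable {P : Type*} [PartialOrder P]

theorem head?_eq_some_forestPhi (w : CoveringForest P) : w.1.head? = some (forestPhi w) :=
  List.head?_eq_some_head w.2.1

theorem forestPhi_eq_iff {x y : CoveringForest P} :
    forestPhi x = forestPhi y ↔ x.1.head? = y.1.head? := by
  simp [head?_eq_some_forestPhi]

def appendPrefix (s : List P) (v : CoveringForest P)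
    (hs : (s ++ [forestPhi v]).IsChain (· ⋖ ·)) : CoveringForest P :=
  ⟨s ++ v.1, List.append_ne_nil_of_right_ne_nil s v.2.1,
    hs.append_of_head?_eq v.2.2.1 (head?_eq_some_forestPhi v).symm,
    fun x hx => v.2.2.2 x (by rwa [List.getLast?_append_of_ne_nil s v.2.1] at hx)⟩

/-- The word `s` with `x = s ++ u` when `x ≤ u`. -/
def stem (u x : CoveringForest P) : List P :=
  x.1.take (x.1.length - u.1.length)

theorem stem_append {u x : CoveringForest P} (hx : x ≤ u) : stem u x ++ u.1 = x.1 :=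
  List.suffix_iff_eq_append.1 hx

theorem stem_eq {u x : CoveringForest P} {s : List P} (hx : x.1 = s ++ u.1) : stem u x = s :=
  List.append_cancel_right ((stem_append (⟨s, hx.symm⟩ : x ≤ u)).trans hx)

theorem isChain_stem_append_forestPhi {u x : CoveringForest P} (hx : x ≤ u) :
    (stem u x ++ [forestPhi u]).IsChain (· ⋖ ·) :=
  (stem_append hx ▸ x.2.2.1 : (stem u x ++ u.1).IsChain (· ⋖ ·)).append_of_head?_eq
    (List.isChain_singleton _) (head?_eq_some_forestPhi u)

variable {u v : CoveringForest P}

def rebase (huv : forestPhi u = forestPhi v) (x : {x : CoveringForest P // x ≤ u}) :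
    {x : CoveringForest P // x ≤ v} :=
  ⟨appendPrefix (stem u x) v (huv ▸ isChain_stem_append_forestPhi x.2), List.suffix_append _ _⟩

theorem rebase_val (huv : forestPhi u = forestPhi v) {x : {x : CoveringForest P // x ≤ u}}
    {s : List P} (hx : x.1.1 = s ++ u.1) : (rebase huv x).1.1 = s ++ v.1 := by
  rw [← stem_eq hx]
  rfl

theorem rebase_rebase (huv : forestPhi u = forestPhi v) (x : {x : CoveringForest P // x ≤ u}) :
    rebase huv.symm (rebase huv x) = x :=
  Subtype.ext <| Subtype.ext <|
    (rebase_val huv.symm (rebase_val huv (stem_append x.2).symm)).trans (stem_append x.2)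

theorem rebase_le_rebase_iff (huv : forestPhi u = forestPhi v)
    {x y : {x : CoveringForest P // x ≤ u}} : rebase huv x ≤ rebase huv y ↔ x ≤ y := by
  change (rebase huv y).1.1 <:+ (rebase huv x).1.1 ↔ y.1.1 <:+ x.1.1
  rw [rebase_val huv (stem_append y.2).symm, rebase_val huv (stem_append x.2).symm,
    ← stem_append x.2, ← stem_append y.2]
  simp only [List.suffix_append_self_iff]

theorem forestPhi_rebase (huv : forestPhi u = forestPhi v) (x : {x : CoveringForest P // x ≤ u}) :
    forestPhi (rebase huv x).1 = forestPhi x.1 := by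
  rw [forestPhi_eq_iff, rebase_val huv (stem_append x.2).symm, ← stem_append x.2,
    List.head?_append, List.head?_append, head?_eq_some_forestPhi, head?_eq_some_forestPhi, huv]

def rebaseIso (huv : forestPhi u = forestPhi v) :
    {x : CoveringForest P // x ≤ u} ≃o {x : CoveringForest P // x ≤ v} where
  toFun := rebase huv
  invFun := rebase huv.symm
  left_inv := rebase_rebase huv
  right_inv := rebase_rebase huv.symm
  map_rel_iff' := rebase_le_rebase_iff huv

end CoveringForest

theorem stmt_8_general (P : Type*) [PartialOrder P] (u v : CoveringForest P)
    (huv : forestPhi u = forestPhi v) :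
    ∃ μ : {x : CoveringForest P // x ≤ u} ≃o {x : CoveringForest P // x ≤ v},
      (∀ (x : {x : CoveringForest P // x ≤ u}) (s : List P),
          x.1.1 = s ++ u.1 → (μ x).1.1 = s ++ v.1) ∧
        ∀ x : {x : CoveringForest P // x ≤ u}, forestPhi (μ x).1 = forestPhi x.1 :=
  ⟨CoveringForest.rebaseIso huv, fun _ _ hx => CoveringForest.rebase_val huv hx,
    CoveringForest.forestPhi_rebase huv⟩

/-- If `u, v` are elements of the covering forest with `φ u = φ v`, then the substitution
`s ++ u ↦ s ++ v` is a well-defined order-isomorphism `↓u ≃o ↓v` commuting with `φ`. -/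
theorem stmt_8 (P : Type*) [PartialOrder P] [Fintype P] (u v : CoveringForest P)
    (huv : forestPhi u = forestPhi v) :
    ∃ μ : {x : CoveringForest P // x ≤ u} ≃o {x : CoveringForest P // x ≤ v},
      (∀ (x : {x : CoveringForest P // x ≤ u}) (s : List P),
          x.1.1 = s ++ u.1 → (μ x).1.1 = s ++ v.1) ∧
        ∀ x : {x : CoveringForest P // x ≤ u}, forestPhi (μ x).1 = forestPhi x.1 :=
  stmt_8_general P u v huv
end

section
/- Let S be a finite join-semilattice. There exists a finite algebra A on the underlying set of S (with the join operation together with a family of unary operations) such that the set of nonempty subuniverses of A, ordered by inclusion, is order-isomorphic to S. Concretely: the subsets of S closed under join and under all the unary maps f_{ts} (for covering pairs s ≺ t, where f_{ts} sends t to s and fixes everything else) are exactly the principal down-sets ↓x, and x ↦ ↓x is an order-isomorphism from S to this family ordered by inclusion. -/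
/-- For a covering pair `s ⋖ t` in a finite join-semilattice, `fts t s` sends `t` to `s`
and fixes everything else. -/
def fts {S : Type*} [SemilatticeSup S] [DecidableEq S] (t s : S) (x : S) : S :=
  if x = t then s else x

/-- A subuniverse of the Birkhoff–Frink algebra on `S`: a subset closed under join and
under all the unary maps `f_{ts}` for covering pairs `s ⋖ t`. -/
def IsSubuniverse {S : Type*} [SemilatticeSup S] [DecidableEq S] (B : Set S) : Prop :=
  (∀ x ∈ B, ∀ y ∈ B, x ⊔ y ∈ B) ∧ ∀ s t : S, s ⋖ t → ∀ x ∈ B, fts t s x ∈ B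

/-! A nonempty subuniverse contains the join `x` of its elements, and it is a down-set: the maps
`f_{ts}` let one walk down from `x` along covers to any `y ≤ x`. Conversely every `↓x` is
closed under joins and under the `f_{ts}`, since `f_{ts}` only ever moves an element down. -/

namespace IsSubuniverse

variable {S : Type*} [SemilatticeSup S] [DecidableEq S] {B : Set S}

theorem Iic (x : S) : IsSubuniverse (Set.Iic x) := by
  refine ⟨fun a ha b hb => sup_le ha hb, fun s t hst a ha => ?_⟩
  unfold fts
  split_ifs with hat
  · exact hst.le.trans (hat ▸ ha)
  · exact ha

theorem mem_of_covBy (hB : IsSubuniverse B) {s t : S} (hst : s ⋖ t) (ht : t ∈ B) : s ∈ B := by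
  simpa [fts] using hB.2 s t hst t ht

theorem mem_of_le [IsStronglyCoatomic S] [WellFoundedLT S] (hB : IsSubuniverse B) {x y : S}
    (hx : x ∈ B) (hyx : y ≤ x) : y ∈ B := by
  induction x using WellFoundedLT.induction with
  | ind x ih =>
    obtain rfl | hlt := hyx.eq_or_lt
    · exact hx
    obtain ⟨z, hyz, hzx⟩ := exists_le_covBy_of_lt hlt
    exact ih z hzx.lt (hB.mem_of_covBy hzx hx) hyz

theorem exists_eq_Iic [Finite S] (hB : IsSubuniverse B) (hne : B.Nonempty) :
    ∃ x, B = Set.Iic x := by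
  set T := B.toFinite.toFinset
  have hT : T.Nonempty := B.toFinite.toFinset_nonempty.2 hne
  have hsup : T.sup' hT id ∈ B :=
    Finset.sup'_mem B hB.1 T hT id fun y hy => B.toFinite.mem_toFinset.1 hy
  refine ⟨T.sup' hT id, Set.Subset.antisymm (fun y hy => ?_) fun y hy => hB.mem_of_le hsup hy⟩
  exact T.le_sup' id (B.toFinite.mem_toFinset.2 hy)

end IsSubuniverse

theorem nonempty_isSubuniverse_iff_exists_eq_Iic {S : Type*} [SemilatticeSup S] [DecidableEq S]
    [Finite S] (B : Set S) : (B.Nonempty ∧ IsSubuniverse B) ↔ ∃ x : S, B = Set.Iic x := by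
  constructor
  · rintro ⟨hne, hB⟩
    exact hB.exists_eq_Iic hne
  · rintro ⟨x, rfl⟩
    exact ⟨Set.nonempty_Iic, IsSubuniverse.Iic x⟩

/-- Birkhoff–Frink: for a finite join-semilattice `S`, the nonempty subuniverses of the
algebra `⟨S; ⊔, {f_{ts}}⟩` are exactly the principal down-sets `↓x`, and `x ↦ ↓x` is an
order-isomorphism from `S` onto this family ordered by inclusion. -/
theorem stmt_9 (S : Type*) [SemilatticeSup S] [Fintype S] [DecidableEq S] :
    (∀ B : Set S, (B.Nonempty ∧ IsSubuniverse B) ↔ ∃ x : S, B = Set.Iic x) ∧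
      ∃ e : S ≃o {B : Set S // B.Nonempty ∧ IsSubuniverse B},
        ∀ x : S, (e x : Set S) = Set.Iic x := by
  let iic : S ↪o {B : Set S // B.Nonempty ∧ IsSubuniverse B} :=
    OrderEmbedding.ofMapLEIff (fun x => ⟨Set.Iic x, Set.nonempty_Iic, IsSubuniverse.Iic x⟩)
      fun _ _ => Set.Iic_subset_Iic
  have hsurj : Function.Surjective iic := fun B => by
    obtain ⟨x, hx⟩ := (nonempty_isSubuniverse_iff_exists_eq_Iic B.1).1 B.2
    exact ⟨x, Subtype.ext hx.symm⟩
  exact ⟨nonempty_isSubuniverse_iff_exists_eq_Iic, RelIso.ofSurjective iic hsurj, fun _ => rfl⟩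
end

section
/- Let S be a finite join-semilattice. A nonempty subset B of S is closed under all the maps f_{ts} (for covering pairs s ≺ t in S) if and only if B is a down-set of S. -/
/-! Since `f_{ts}` moves only `t`, closure of `B` under it says exactly `t ∈ B → s ∈ B`;
and in a finite poset every relation `x < y` factors through a cover `x ≤ z ⋖ y`, so closure
under covers is closure downwards. -/

theorem isLowerSet_iff_forall_covBy {α : Type*} [PartialOrder α] [WellFoundedLT α]
    [IsStronglyCoatomic α] {B : Set α} :
    IsLowerSet B ↔ ∀ s t : α, s ⋖ t → t ∈ B → s ∈ B := by
  refine ⟨fun hB s t hst ht => hB hst.le ht, fun h y => ?_⟩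
  induction y using WellFoundedLT.induction with
  | ind y ih =>
    intro x hxy hy
    rcases hxy.eq_or_lt with rfl | hlt
    · exact hy
    · obtain ⟨z, hxz, hzy⟩ := exists_le_covBy_of_lt hlt
      exact ih z hzy.lt hxz (h z y hzy hy)

theorem forall_fts_mem_iff {S : Type*} [SemilatticeSup S] [DecidableEq S] {B : Set S}
    {s t : S} : (∀ x ∈ B, fts t s x ∈ B) ↔ (t ∈ B → s ∈ B) := by
  refine ⟨fun h ht => by simpa [fts] using h t ht, fun h x hx => ?_⟩
  by_cases hxt : x = t
  · simpa [fts, hxt] using h (hxt ▸ hx)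
  · simpa [fts, hxt] using hx

theorem stmt_10_general (S : Type*) [SemilatticeSup S] [Fintype S] [DecidableEq S] (B : Set S) :
    (∀ s t : S, s ⋖ t → ∀ x ∈ B, fts t s x ∈ B) ↔ IsLowerSet B := by
  simp only [forall_fts_mem_iff]
  exact isLowerSet_iff_forall_covBy.symm

/-- A nonempty subset of a finite join-semilattice is closed under all the maps `f_{ts}`
(for covering pairs `s ⋖ t`) if and only if it is a down-set. -/
theorem stmt_10 (S : Type*) [SemilatticeSup S] [Fintype S] [DecidableEq S] (B : Set S)
    (hB : B.Nonempty) :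
    (∀ s t : S, s ⋖ t → ∀ x ∈ B, fts t s x ∈ B) ↔ IsLowerSet B :=
  stmt_10_general S B
end

section
/- Let A = ⟨A; f⟩ be a finite monounary algebra (a finite set with a single unary operation) and let n be the least common multiple of the lengths of the cycles of A. If n = 1 (all cycles are fixed points), then any two finite algebras in the variety generated by A are homomorphically equivalent: every finite model B of the equational theory of A contains a fixed point of f, and hence there are homomorphisms between any two such models in both directions. -/
/-!
Every orbit of a finite algebra reaches a cycle within `card A` steps, and the cycles of `A` are
fixed points, so `A` satisfies `f^(N+1)(x) ≈ f^N(x)` with `N = card A`. In any model `B` of this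
equation `g^N(b)` is a fixed point, and a constant map onto a fixed point is a homomorphism.
-/

namespace Function

variable {α : Type*} {f : α → α}

theorem iterate_mem_periodicPts_of_iterate_eq {x : α} {i j : ℕ} (hij : i < j)
    (h : f^[i] x = f^[j] x) : f^[i] x ∈ periodicPts f := by
  refine mk_mem_periodicPts (n := j - i) (by omega) ?_
  change f^[j - i] (f^[i] x) = f^[i] x
  rw [← iterate_add_apply, Nat.sub_add_cancel hij.le, h]

theorem exists_iterate_mem_periodicPts [Fintype α] (f : α → α) (x : α) :
    ∃ i ≤ Fintype.card α, f^[i] x ∈ periodicPts f := by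
  obtain ⟨i, j, hne, hij⟩ := Fintype.exists_ne_map_eq_of_card_lt
    (fun n : Fin (Fintype.card α + 1) => f^[n] x) (by simp)
  rcases lt_or_gt_of_ne (Fin.val_ne_of_ne hne) with hlt | hlt
  · exact ⟨i, by omega, iterate_mem_periodicPts_of_iterate_eq hlt hij⟩
  · exact ⟨j, by omega, iterate_mem_periodicPts_of_iterate_eq hlt hij.symm⟩

theorem isFixedPt_iterate_card [Fintype α] (hf : ∀ x ∈ periodicPts f, IsFixedPt f x) (x : α) :
    IsFixedPt f (f^[Fintype.card α] x) := by
  obtain ⟨i, hi, hper⟩ := exists_iterate_mem_periodicPts f x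
  have hstable : f^[Fintype.card α] x = f^[i] x := by
    have := (hf _ hper).iterate (Fintype.card α - i)
    rwa [IsFixedPt, ← iterate_add_apply, Nat.sub_add_cancel hi] at this
  rw [hstable]
  exact hf _ hper

end Function

open Function

theorem stmt_12_general (A : Type*) [Fintype A] (f : A → A)
    (hcyc : ∀ a : A, (∃ k : ℕ, 0 < k ∧ f^[k] a = a) → f a = a)
    (B C : Type*) [Nonempty B] [Nonempty C]
    (g : B → B) (h : C → C)
    (hB : ∀ j k : ℕ, (∀ a : A, f^[j] a = f^[k] a) → ∀ b : B, g^[j] b = g^[k] b)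
    (hC : ∀ j k : ℕ, (∀ a : A, f^[j] a = f^[k] a) → ∀ c : C, h^[j] c = h^[k] c) :
    (∃ b : B, g b = b) ∧
      (∃ φ : B → C, ∀ x : B, φ (g x) = h (φ x)) ∧
      (∃ ψ : C → B, ∀ x : C, ψ (h x) = g (ψ x)) := by
  set N := Fintype.card A
  have hA : ∀ a : A, f^[N + 1] a = f^[N] a := fun a =>
    (iterate_succ_apply' f N a).trans (isFixedPt_iterate_card hcyc a)
  obtain ⟨b₀⟩ := ‹Nonempty B›
  obtain ⟨c₀⟩ := ‹Nonempty C›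
  have hb : IsFixedPt g (g^[N] b₀) := (iterate_succ_apply' g N b₀).symm.trans (hB _ _ hA b₀)
  have hc : IsFixedPt h (h^[N] c₀) := (iterate_succ_apply' h N c₀).symm.trans (hC _ _ hA c₀)
  exact ⟨⟨_, hb⟩, ⟨fun _ => h^[N] c₀, fun _ => hc.symm⟩, ⟨fun _ => g^[N] b₀, fun _ => hb.symm⟩⟩

/-- If every cycle of a finite monounary algebra `⟨A; f⟩` is a fixed point (the lcm of the
cycle lengths is `1`), then every finite model of the equational theory of `A` contains a
fixed point, and any two finite nonempty models are homomorphically equivalent. -/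
theorem stmt_12 (A : Type*) [Fintype A] [Nonempty A] (f : A → A)
    (hcyc : ∀ a : A, (∃ k : ℕ, 0 < k ∧ f^[k] a = a) → f a = a)
    (B C : Type*) [Fintype B] [Fintype C] [Nonempty B] [Nonempty C]
    (g : B → B) (h : C → C)
    (hB : ∀ j k : ℕ, (∀ a : A, f^[j] a = f^[k] a) → ∀ b : B, g^[j] b = g^[k] b)
    (hC : ∀ j k : ℕ, (∀ a : A, f^[j] a = f^[k] a) → ∀ c : C, h^[j] c = h^[k] c) :
    (∃ b : B, g b = b) ∧
      (∃ φ : B → C, ∀ x : B, φ (g x) = h (φ x)) ∧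
      (∃ ψ : C → B, ∀ x : C, ψ (h x) = g (ψ x)) :=
  stmt_12_general A f hcyc B C g h hB hC
end

section
/- Let Q be a finite algebra such that every nontrivial finite member of the variety Var(Q) is isomorphic to a finite product of subalgebras of Q (e.g., Q quasi-primal). Fix a transversal 𝒫 of Sub(Q)/≡ ordered by the existence of homomorphisms, with Q as top element. Then for each nontrivial finite A ∈ Var(Q) there is a nonempty up-set 𝒰 of 𝒫 with A homomorphically equivalent to ∏𝒰. -/
/-!
Write `A ≅ ∏ᵢ Sᵢ` with subalgebras `Sᵢ` of `Q`, and let `Tᵢ ∈ 𝒫` represent `Sᵢ`. The up-set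
`𝒰` generated by the `Tᵢ` is nonempty since `A` is nontrivial. Every `U ∈ 𝒰` receives a
homomorphism from some `Sᵢ`, and every `Sᵢ` receives one from `Tᵢ ∈ 𝒰`; a product receives a
homomorphism from another product as soon as each of its factors receives one from some factor
of the other, so `∏ᵢ Sᵢ ≡ ∏𝒰`.
-/

open FirstOrder FirstOrder.Language FirstOrder.Language.Structure

namespace Stmt14

variable {L : Language}

/-- The pointwise structure on a product of structures. -/
instance piStructure {ι : Type*} (M : ι → Type*) [∀ i, L.Structure (M i)] :
    L.Structure (∀ i, M i) where
  funMap f x i := funMap f fun j => x j i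
  RelMap r x := ∀ i, RelMap r fun j => x j i

/-- Homomorphic equivalence: homomorphisms exist in both directions. -/
def HomEquiv (L : Language) (M N : Type*) [L.Structure M] [L.Structure N] : Prop :=
  Nonempty (M →[L] N) ∧ Nonempty (N →[L] M)

/-- `A` lies in the variety generated by `Q`: every equation valid in `Q` is valid
in `A`. -/
def InVar (L : Language) (Q : Type*) [L.Structure Q] (A : Type*) [L.Structure A] : Prop :=
  ∀ t₁ t₂ : L.Term ℕ, (∀ v : ℕ → Q, t₁.realize v = t₂.realize v) →
    ∀ v : ℕ → A, t₁.realize v = t₂.realize v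

section Pi

variable {ι κ : Type*} (M : ι → Type*) [∀ i, L.Structure (M i)]

def projHom (i : ι) : (∀ j, M j) →[L] M i where
  toFun x := x i
  map_fun' _ _ := rfl
  map_rel' _ _ h := h i

def piHom {N : Type*} [L.Structure N] (g : ∀ i, N →[L] M i) : N →[L] ∀ i, M i where
  toFun x i := g i x
  map_fun' f x := funext fun i => (g i).map_fun f x
  map_rel' r x h i := (g i).map_rel r x h

variable {M} {N : κ → Type*} [∀ k, L.Structure (N k)]

theorem nonempty_hom_pi_of_forall_exists (h : ∀ k, ∃ i, Nonempty (M i →[L] N k)) :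
    Nonempty ((∀ i, M i) →[L] ∀ k, N k) := by
  choose i g using h
  exact ⟨piHom N fun k => (g k).some.comp (projHom M (i k))⟩

theorem homEquiv_pi_of_forall_exists (hMN : ∀ k, ∃ i, Nonempty (M i →[L] N k))
    (hNM : ∀ i, ∃ k, Nonempty (N k →[L] M i)) : HomEquiv L (∀ i, M i) (∀ k, N k) :=
  ⟨nonempty_hom_pi_of_forall_exists hMN, nonempty_hom_pi_of_forall_exists hNM⟩

theorem nonempty_of_nontrivial_pi [Nontrivial (∀ i, M i)] : Nonempty ι := by
  by_contra h
  have : IsEmpty ι := not_nonempty_iff.mp h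
  exact not_subsingleton (∀ i, M i) inferInstance

end Pi

section HomEquiv

variable {A B C : Type*} [L.Structure A] [L.Structure B] [L.Structure C]

theorem HomEquiv.trans (hAB : HomEquiv L A B) (hBC : HomEquiv L B C) : HomEquiv L A C :=
  ⟨⟨hBC.1.some.comp hAB.1.some⟩, ⟨hAB.2.some.comp hBC.2.some⟩⟩

theorem _root_.FirstOrder.Language.Equiv.homEquiv (e : A ≃[L] B) : HomEquiv L A B :=
  ⟨⟨e.toHom⟩, ⟨e.symm.toHom⟩⟩

end HomEquiv

section UpClosure

variable {Q : Type*} [L.Structure Q] {ι : Type*}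

def upClosure (Ps : Set (L.Substructure Q)) (S : ι → L.Substructure Q) :
    Set (L.Substructure Q) :=
  {U | U ∈ Ps ∧ ∃ i, Nonempty (S i →[L] U)}

variable {Ps : Set (L.Substructure Q)} {S : ι → L.Substructure Q}

theorem upClosure_subset : upClosure Ps S ⊆ Ps := fun _ hU => hU.1

theorem upClosure_isUpSet :
    ∀ T₁ ∈ upClosure Ps S, ∀ T₂ ∈ Ps, Nonempty (T₁ →[L] T₂) → T₂ ∈ upClosure Ps S := by
  rintro T₁ ⟨-, i, ⟨f⟩⟩ T₂ hT₂ ⟨g⟩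
  exact ⟨hT₂, i, ⟨g.comp f⟩⟩

theorem mem_upClosure {T : L.Substructure Q} (hT : T ∈ Ps) (i : ι)
    (f : S i →[L] T) : T ∈ upClosure Ps S :=
  ⟨hT, i, ⟨f⟩⟩

end UpClosure

theorem stmt_14_general (L : Language) (Q : Type) [L.Structure Q]
    (hprod : ∀ (A : Type) [Fintype A] [L.Structure A], InVar L Q A → Nontrivial A →
      ∃ (n : ℕ) (S : Fin n → L.Substructure Q), Nonempty (A ≃[L] ∀ i, (S i : Type)))
    (Ps : Set (L.Substructure Q))
    (hrep : ∀ S : L.Substructure Q, ∃ T ∈ Ps, HomEquiv L S T)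
    (A : Type) [Fintype A] [L.Structure A] (hA : InVar L Q A) (hAnt : Nontrivial A) :
    ∃ Us : Set (L.Substructure Q), Us ⊆ Ps ∧ Us.Nonempty ∧
      (∀ T₁ ∈ Us, ∀ T₂ ∈ Ps, Nonempty (T₁ →[L] T₂) → T₂ ∈ Us) ∧
      HomEquiv L A (∀ S : Us, (S.1 : Type)) := by
  obtain ⟨n, S, ⟨e⟩⟩ := hprod A hA hAnt
  choose T hTPs hTS using fun i => hrep (S i)
  have hT : ∀ i, T i ∈ upClosure Ps S := fun i => mem_upClosure (hTPs i) i (hTS i).1.some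
  have : Nontrivial (∀ i, (S i : Type)) := e.symm.toEquiv.nontrivial
  obtain ⟨i₀⟩ := nonempty_of_nontrivial_pi (M := fun i => (S i : Type))
  refine ⟨upClosure Ps S, upClosure_subset, ⟨T i₀, hT i₀⟩, upClosure_isUpSet, ?_⟩
  refine e.homEquiv.trans (homEquiv_pi_of_forall_exists ?_ ?_)
  · exact fun U => U.2.2
  · exact fun i => ⟨⟨T i, hT i⟩, (hTS i).2⟩

/-- Let `Q` be a finite algebra such that every nontrivial finite member of `Var(Q)` is
isomorphic to a finite product of subalgebras of `Q` (e.g. `Q` quasi-primal), and let `Ps`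
be a transversal of `Sub(Q)/≡` with `Q` (i.e. `⊤`) as top element. Then every nontrivial
finite `A ∈ Var(Q)` is homomorphically equivalent to the product of a nonempty up-set
of `Ps`. -/
theorem stmt_14 (L : Language) (Q : Type) [L.Structure Q] [Fintype Q]
    (hprod : ∀ (A : Type) [Fintype A] [L.Structure A], InVar L Q A → Nontrivial A →
      ∃ (n : ℕ) (S : Fin n → L.Substructure Q), Nonempty (A ≃[L] ∀ i, (S i : Type)))
    (Ps : Set (L.Substructure Q))
    (hQtop : (⊤ : L.Substructure Q) ∈ Ps)
    (hrep : ∀ S : L.Substructure Q, ∃ T ∈ Ps, HomEquiv L S T)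
    (huniq : ∀ T₁ ∈ Ps, ∀ T₂ ∈ Ps, HomEquiv L T₁ T₂ → T₁ = T₂)
    (htriv : ∀ T ∈ Ps, (∃ x : T, ∀ n (f : L.Functions n) (v : Fin n → T),
        funMap f v = x) → T = ⊤)
    (A : Type) [Fintype A] [L.Structure A] (hA : InVar L Q A) (hAnt : Nontrivial A) :
    ∃ Us : Set (L.Substructure Q), Us ⊆ Ps ∧ Us.Nonempty ∧
      (∀ T₁ ∈ Us, ∀ T₂ ∈ Ps, Nonempty (T₁ →[L] T₂) → T₂ ∈ Us) ∧
      HomEquiv L A (∀ S : Us, (S.1 : Type)) :=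
  stmt_14_general L Q hprod Ps hrep A hA hAnt

end Stmt14
end

section
/- Let σ be a universal first-order sentence in the language of lattices that fails in some lattice L. Then σ fails in some finite lattice. (Proof idea: take witnesses, close under the finitely many subterms of σ to get a finite subposet A of L, and take the Dedekind–MacNeille completion of A, which preserves all joins and meets of A that exist in L among elements of A.) -/
open FirstOrder

/-- The language of lattices: two binary function symbols (`⊔` for `true`, `⊓` for
`false`) and no relation symbols. -/
def latLang : Language :=
  ⟨fun n => match n with | 2 => Bool | _ => Empty, fun _ => Empty⟩

/-- Every lattice is a structure for the language of lattices. -/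
def latStructure (M : Type*) [Lattice M] : latLang.Structure M where
  funMap {n} f x :=
    match n, f, x with
    | 2, true, x => x 0 ⊔ x 1
    | 2, false, x => x 0 ⊓ x 1
  RelMap {n} r _ := Empty.elim r

/-!
Take an assignment in `M` falsifying the quantifier-free matrix and let `S` be the finite set of
values of all its subterms. A join `a ⊔ b` of elements of `S` that lies in `S` is also their least
upper bound inside the poset `S`, so the embedding of `S` into its Dedekind–MacNeille completion
preserves it (dually for meets). Hence every subterm is evaluated compatibly, and the matrix
still fails in the finite lattice `DedekindCut S`.
-/

namespace FirstOrder.Language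

variable {L : Language} {M N : Type*} [L.Structure M] [L.Structure N] {α : Type*}

open Structure

def PreservesFunMapOn (L : Language) [L.Structure M] [L.Structure N] (f : M → N) (S : Set M) :
    Prop :=
  ∀ ⦃l⦄ (F : L.Functions l) (x : Fin l → M),
    (∀ i, x i ∈ S) → funMap F x ∈ S → f (funMap F x) = funMap F (f ∘ x)

namespace Term

def subtermValues (v : α → M) : L.Term α → Set M
  | var a => {v a}
  | func F ts => insert (funMap F fun i => (ts i).realize v) (⋃ i, (ts i).subtermValues v)

theorem realize_mem_subtermValues (v : α → M) : ∀ t : L.Term α, t.realize v ∈ t.subtermValues v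
  | var _ => rfl
  | func _ _ => Set.mem_insert _ _

theorem finite_subtermValues (v : α → M) : ∀ t : L.Term α, (t.subtermValues v).Finite
  | var _ => Set.finite_singleton _
  | func _ ts => (Set.finite_iUnion fun i => finite_subtermValues v (ts i)).insert _

theorem realize_comp_of_subtermValues_subset {f : M → N} {S : Set M}
    (hf : L.PreservesFunMapOn f S) (v : α → M) :
    ∀ t : L.Term α, t.subtermValues v ⊆ S → t.realize (f ∘ v) = f (t.realize v)
  | var _, _ => rfl
  | func F ts, ht => by
    have hts (i) : (ts i).subtermValues v ⊆ S :=
      (Set.subset_iUnion (fun i => (ts i).subtermValues v) i).trans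
        ((Set.subset_insert _ _).trans ht)
    have ih (i) := realize_comp_of_subtermValues_subset hf v (ts i) (hts i)
    simp only [realize_func, ih]
    exact (hf F _ (fun i => hts i (realize_mem_subtermValues v _))
      (ht (Set.mem_insert _ _))).symm

end Term

namespace BoundedFormula

variable {n : ℕ}

/-- Quantified subformulas contribute nothing, so this collects all subterm values only for
quantifier-free formulas. -/
def subtermValues (v : α → M) (xs : Fin n → M) : L.BoundedFormula α n → Set M
  | falsum => ∅
  | equal t₁ t₂ => t₁.subtermValues (Sum.elim v xs) ∪ t₂.subtermValues (Sum.elim v xs)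
  | rel _ ts => ⋃ i, (ts i).subtermValues (Sum.elim v xs)
  | imp φ ψ => φ.subtermValues v xs ∪ ψ.subtermValues v xs
  | all _ => ∅

theorem finite_subtermValues (v : α → M) (xs : Fin n → M) :
    ∀ φ : L.BoundedFormula α n, (φ.subtermValues v xs).Finite
  | falsum => Set.finite_empty
  | equal t₁ t₂ => (t₁.finite_subtermValues _).union (t₂.finite_subtermValues _)
  | rel _ ts => Set.finite_iUnion fun i => (ts i).finite_subtermValues _
  | imp φ ψ => (finite_subtermValues v xs φ).union (finite_subtermValues v xs ψ)
  | all _ => Set.finite_empty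

theorem IsQF.realize_comp_iff {φ : L.BoundedFormula α n} (hφ : φ.IsQF) {f : M → N} {S : Set M}
    (hinj : S.InjOn f) (hfun : L.PreservesFunMapOn f S)
    (hrel : ∀ ⦃l⦄ (R : L.Relations l) (x : Fin l → M), (∀ i, x i ∈ S) →
      (RelMap R (f ∘ x) ↔ RelMap R x))
    (v : α → M) (xs : Fin n → M) (hS : φ.subtermValues v xs ⊆ S) :
    φ.Realize (f ∘ v) (f ∘ xs) ↔ φ.Realize v xs := by
  induction hφ with
  | falsum => exact Iff.rfl
  | of_isAtomic hat =>
    cases hat with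
    | equal t₁ t₂ =>
      have h₁ : t₁.subtermValues (Sum.elim v xs) ⊆ S := Set.subset_union_left.trans hS
      have h₂ : t₂.subtermValues (Sum.elim v xs) ⊆ S := Set.subset_union_right.trans hS
      simp only [realize_bdEqual, ← Sum.comp_elim,
        Term.realize_comp_of_subtermValues_subset hfun _ _ h₁,
        Term.realize_comp_of_subtermValues_subset hfun _ _ h₂]
      exact hinj.eq_iff (h₁ (Term.realize_mem_subtermValues _ _))
        (h₂ (Term.realize_mem_subtermValues _ _))
    | rel R ts =>
      have hts (i) : (ts i).subtermValues (Sum.elim v xs) ⊆ S :=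
        (Set.subset_iUnion (fun i => (ts i).subtermValues (Sum.elim v xs)) i).trans hS
      change RelMap R (fun i => _) ↔ RelMap R (fun i => _)
      simp only [← Sum.comp_elim, Term.realize_comp_of_subtermValues_subset hfun _ _ (hts _)]
      exact hrel R _ fun i => hts i (Term.realize_mem_subtermValues _ _)
  | imp _ _ ih₁ ih₂ =>
    exact imp_congr (ih₁ (Set.subset_union_left.trans hS))
      (ih₂ (Set.subset_union_right.trans hS))

end BoundedFormula

end FirstOrder.Language

attribute [local instance] latStructure

open FirstOrder Language Structure

theorem latLang.preservesFunMapOn_of_sup_of_inf {M N : Type*} [Lattice M] [Lattice N]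
    {f : M → N} {S : Set M}
    (hsup : ∀ a ∈ S, ∀ b ∈ S, a ⊔ b ∈ S → f (a ⊔ b) = f a ⊔ f b)
    (hinf : ∀ a ∈ S, ∀ b ∈ S, a ⊓ b ∈ S → f (a ⊓ b) = f a ⊓ f b) :
    latLang.PreservesFunMapOn f S
  | 2, true, _, hx, hS => hsup _ (hx 0) _ (hx 1) hS
  | 2, false, _, hx, hS => hinf _ (hx 0) _ (hx 1) hS

def OrderIso.toLatLangEquiv {A B : Type*} [Lattice A] [Lattice B] (e : A ≃o B) :
    A ≃[latLang] B where
  toEquiv := e.toEquiv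
  map_fun' {l} F x :=
    match l, F with
    | 2, true => e.map_sup (x 0) (x 1)
    | 2, false => e.map_inf (x 0) (x 1)
  map_rel' r := Empty.elim r

theorem isLUB_pair_of_val_eq_sup {M : Type*} [Lattice M] {S : Set M} {x y z : S}
    (h : (z : M) = ↑x ⊔ ↑y) : IsLUB {x, y} z := by
  refine ⟨?_, fun w hw => h.trans_le (sup_le (hw (.inl rfl)) (hw (.inr rfl)))⟩
  rw [upperBounds_insert, upperBounds_singleton]
  exact ⟨show (x : M) ≤ z from h ▸ le_sup_left, show (y : M) ≤ z from h ▸ le_sup_right⟩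

theorem isGLB_pair_of_val_eq_inf {M : Type*} [Lattice M] {S : Set M} {x y z : S}
    (h : (z : M) = ↑x ⊓ ↑y) : IsGLB {x, y} z :=
  isLUB_pair_of_val_eq_sup (M := Mᵒᵈ) h

namespace DedekindCut

variable {α : Type*}

instance [Preorder α] [Finite α] : Finite (DedekindCut α) :=
  Finite.of_injective left fun _ _ => ext

theorem principal_eq_sup_of_isLUB [Preorder α] {a b c : α} (h : IsLUB {a, b} c) :
    principal c = principal a ⊔ principal b := by
  refine le_antisymm (principal_le_iff.2 fun y hy => h.2 ?_) ?_
  · rintro _ (rfl | rfl)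
    exacts [hy.1, hy.2]
  · exact sup_le (principal_le_principal.2 (h.1 (.inl rfl)))
      (principal_le_principal.2 (h.1 (.inr rfl)))

theorem principal_eq_inf_of_isGLB [Preorder α] {a b c : α} (h : IsGLB {a, b} c) :
    principal c = principal a ⊓ principal b := by
  refine le_antisymm ?_ (le_principal_iff.2 fun y hy => h.2 ?_)
  · exact le_inf (principal_le_principal.2 (h.1 (.inl rfl)))
      (principal_le_principal.2 (h.1 (.inr rfl)))
  · rintro _ (rfl | rfl)
    exacts [hy.1, hy.2]

noncomputable def principalOn [Preorder α] (S : Set α) : α → DedekindCut S :=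
  Function.extend Subtype.val principal ⊥

theorem principalOn_of_mem [Preorder α] {S : Set α} {a : α} (ha : a ∈ S) :
    principalOn S a = principal ⟨a, ha⟩ :=
  Subtype.val_injective.extend_apply _ _ (⟨a, ha⟩ : S)

theorem injOn_principalOn [PartialOrder α] (S : Set α) : S.InjOn (principalOn S) :=
  fun a ha b hb h => by
    simpa [principalOn_of_mem ha, principalOn_of_mem hb] using h

theorem preservesFunMapOn_principalOn [Lattice α] (S : Set α) :
    latLang.PreservesFunMapOn (principalOn S) S := by
  refine latLang.preservesFunMapOn_of_sup_of_inf
    (fun a ha b hb hab => ?_) (fun a ha b hb hab => ?_)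
  · simp only [principalOn_of_mem, ha, hb, hab]
    exact principal_eq_sup_of_isLUB (isLUB_pair_of_val_eq_sup rfl)
  · simp only [principalOn_of_mem, ha, hb, hab]
    exact principal_eq_inf_of_isGLB (isGLB_pair_of_val_eq_inf rfl)

end DedekindCut

theorem FirstOrder.Language.BoundedFormula.IsQF.realize_principalOn_iff {M α : Type*} [Lattice M]
    {n : ℕ} {φ : latLang.BoundedFormula α n} (hφ : φ.IsQF) {S : Set M} {v : α → M}
    {xs : Fin n → M} (hS : φ.subtermValues v xs ⊆ S) :
    φ.Realize (DedekindCut.principalOn S ∘ v) (DedekindCut.principalOn S ∘ xs) ↔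
      φ.Realize v xs :=
  hφ.realize_comp_iff (DedekindCut.injOn_principalOn S)
    (DedekindCut.preservesFunMapOn_principalOn S) (fun _ R => Empty.elim R) v xs hS

theorem exists_lattice_fintype_not_realize_of_finite {K : Type*} [Lattice K] [Finite K]
    {σ : latLang.Sentence} (h : ¬ K ⊨ σ) :
    ∃ (N : Type) (_ : Lattice N) (_ : Fintype N), ¬ N ⊨ σ := by
  let e := equivShrink.{0} K
  let _ : Lattice (Shrink.{0} K) := e.symm.lattice
  let g : Shrink.{0} K ≃o K := ⟨e.symm, Iff.rfl⟩
  exact ⟨Shrink K, _, .ofFinite _,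
    fun hN => h ((StrongHomClass.realize_sentence g.toLatLangEquiv σ).1 hN)⟩

/-- If a universal first-order sentence in the language of lattices fails in some lattice,
then it fails in some finite lattice. -/
theorem stmt_17 (n : ℕ) (φ : latLang.BoundedFormula Empty n) (hqf : φ.IsQF)
    (M : Type*) [Lattice M]
    (hfail : ¬ @FirstOrder.Language.Sentence.Realize latLang M (latStructure M) φ.alls) :
    ∃ (N : Type) (instN : Lattice N) (_ : Fintype N),
      ¬ @FirstOrder.Language.Sentence.Realize latLang N (@latStructure N instN) φ.alls := by
  rw [Sentence.Realize, BoundedFormula.realize_alls, not_forall] at hfail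
  obtain ⟨xs, hxs⟩ := hfail
  let S := φ.subtermValues default xs
  have : Finite S := (φ.finite_subtermValues default xs).to_subtype
  refine exists_lattice_fintype_not_realize_of_finite (K := DedekindCut S) ?_
  rw [Sentence.Realize, BoundedFormula.realize_alls, not_forall]
  refine ⟨DedekindCut.principalOn S ∘ xs, ?_⟩
  rwa [← Unique.eq_default (DedekindCut.principalOn S ∘ default),
    hqf.realize_principalOn_iff subset_rfl]
end

section
/- Let A be the four-element distributive bisemilattice S × L with elements 0 = (x,y), a = (y,y), b = (x,z), 1 = (y,z), where ⟨{x,y}; ∧, ⊓⟩ has both operations as the semilattice with x below y, and ⟨{y,z}; ∧, ⊓⟩ has ∧ the meet of the chain y < z and ⊓ the meet of the chain z < y. Then the congruence lattice of A is isomorphic to the pentagon N₅: its congruences are exactly 0_A, α (classes {a,1},{0,b}), β (classes {0,a},{b,1}), γ (classes {a},{1},{0,b}), and 1_A, with γ < α, γ and β incomparable, α and β incomparable, α ∩ β = 0_A, α ∨ β = 1_A, γ ∨ β = 1_A, γ ∩ β = 0_A. -/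
/-!
Compatibility with the two operations forces `θ 0 a ↔ θ b 1`, `θ a 1 → θ 0 b` and
`θ 0 1 ↔ θ a b ↔ θ 0 a ∧ θ 0 b`, while transitivity gives `θ 0 a ∧ θ 0 b → θ a 1`.
So a congruence is determined by `θ 0 a`, `θ 0 b` and `θ a 1`, and only five combinations
of these are consistent: those of `⊥, α, β, γ, ⊤`.
-/
namespace Stmt18

/-- The four-element distributive bisemilattice `S × L`, realized on `Bool × Bool`:
`0 = (false, false)`, `a = (true, false)`, `b = (false, true)`, `1 = (true, true)`. -/
abbrev A : Type := Bool × Bool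

/-- The first semilattice operation `∧` (pointwise meet). -/
def meet₁ (p q : A) : A := (p.1 && q.1, p.2 && q.2)

/-- The second semilattice operation `⊓` (meet in the first coordinate, join in the
second, reflecting that `⊓` reverses the chain of `L`). -/
def meet₂ (p q : A) : A := (p.1 && q.1, p.2 || q.2)

/-- A congruence on the bisemilattice `A`. -/
def IsCong (θ : Setoid A) : Prop :=
  ∀ p q r s : A, θ.r p q → θ.r r s → θ.r (meet₁ p r) (meet₁ q s) ∧ θ.r (meet₂ p r) (meet₂ q s)

/-- The congruence `α`, with classes `{a, 1}` and `{0, b}`. -/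
def α : Setoid A := ⟨fun p q => p.1 = q.1, ⟨fun _ => rfl, Eq.symm, Eq.trans⟩⟩

/-- The congruence `β`, with classes `{0, a}` and `{b, 1}`. -/
def β : Setoid A := ⟨fun p q => p.2 = q.2, ⟨fun _ => rfl, Eq.symm, Eq.trans⟩⟩

/-- The congruence `γ`, with classes `{a}`, `{1}` and `{0, b}`. -/
def γ : Setoid A :=
  ⟨fun p q => (p.1 = false ∧ q.1 = false) ∨ p = q,
    ⟨fun _ => Or.inr rfl,
     fun h => h.elim (fun h => Or.inl ⟨h.2, h.1⟩) (fun h => Or.inr h.symm),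
     fun h₁ h₂ => by
        rcases h₁ with h₁ | h₁
        · rcases h₂ with h₂ | h₂
          · exact Or.inl ⟨h₁.1, h₂.2⟩
          · exact Or.inl ⟨h₁.1, h₂ ▸ h₁.2⟩
        · rcases h₂ with h₂ | h₂
          · exact Or.inl ⟨h₁ ▸ h₂.1, h₂.2⟩
          · exact Or.inr (h₁.trans h₂)⟩⟩

local notation "𝟎" => ((false, false) : A)
local notation "𝐚" => ((true, false) : A)
local notation "𝐛" => ((false, true) : A)
local notation "𝟏" => ((true, true) : A)

theorem Setoid.not_le_of_rel {X : Type*} {r s : Setoid X} {x y : X} (hr : r x y) (hs : ¬ s x y) :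
    ¬ r ≤ s :=
  fun h => hs (h hr)

theorem Setoid.sup_eq_top_of_forall_exists {X : Type*} {r s : Setoid X}
    (h : ∀ x y, ∃ z w, s x z ∧ r z w ∧ s w y) : r ⊔ s = ⊤ := by
  refine Setoid.eq_top_iff.2 fun x y => ?_
  obtain ⟨z, w, hxz, hzw, hwy⟩ := h x y
  have hs : s ≤ r ⊔ s := le_sup_right
  exact (r ⊔ s).trans' (hs hxz) ((r ⊔ s).trans' ((le_sup_left : r ≤ r ⊔ s) hzw) (hs hwy))

@[simp] theorem α_apply {p q : A} : α p q ↔ p.1 = q.1 := Iff.rfl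
@[simp] theorem β_apply {p q : A} : β p q ↔ p.2 = q.2 := Iff.rfl
@[simp] theorem γ_apply {p q : A} : γ p q ↔ (p.1 = false ∧ q.1 = false) ∨ p = q := Iff.rfl

theorem setoid_ext_of_pairs {θ σ : Setoid A}
    (h0a : θ 𝟎 𝐚 ↔ σ 𝟎 𝐚) (h0b : θ 𝟎 𝐛 ↔ σ 𝟎 𝐛) (h01 : θ 𝟎 𝟏 ↔ σ 𝟎 𝟏)
    (hab : θ 𝐚 𝐛 ↔ σ 𝐚 𝐛) (ha1 : θ 𝐚 𝟏 ↔ σ 𝐚 𝟏) (hb1 : θ 𝐛 𝟏 ↔ σ 𝐛 𝟏) : θ = σ := by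
  ext ⟨_ | _, _ | _⟩ ⟨_ | _, _ | _⟩ <;>
    first
    | exact iff_of_true (θ.refl' _) (σ.refl' _)
    | assumption
    | rw [θ.comm', σ.comm']; assumption

namespace IsCong

variable {θ : Setoid A}

theorem meet₁_right (h : IsCong θ) {p q : A} (hpq : θ p q) (r : A) :
    θ (meet₁ p r) (meet₁ q r) :=
  (h p q r r hpq (θ.refl' r)).1

theorem meet₂_right (h : IsCong θ) {p q : A} (hpq : θ p q) (r : A) :
    θ (meet₂ p r) (meet₂ q r) :=
  (h p q r r hpq (θ.refl' r)).2

theorem rel_zero_a_iff (h : IsCong θ) : θ 𝟎 𝐚 ↔ θ 𝐛 𝟏 :=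
  ⟨fun h0a => h.meet₂_right h0a 𝟏, fun hb1 => h.meet₁_right hb1 𝐚⟩

theorem rel_zero_b_of_rel_a_one (h : IsCong θ) (ha1 : θ 𝐚 𝟏) : θ 𝟎 𝐛 :=
  h.meet₁_right ha1 𝐛

theorem rel_a_one_of_rel_zero_a_of_rel_zero_b (h : IsCong θ) (h0a : θ 𝟎 𝐚) (h0b : θ 𝟎 𝐛) :
    θ 𝐚 𝟏 :=
  θ.trans' (θ.trans' (θ.symm' h0a) h0b) (h.rel_zero_a_iff.1 h0a)

theorem rel_zero_one_iff (h : IsCong θ) : θ 𝟎 𝟏 ↔ θ 𝟎 𝐚 ∧ θ 𝟎 𝐛 :=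
  ⟨fun h01 => ⟨h.meet₁_right h01 𝐚, h.meet₁_right h01 𝐛⟩,
    fun ⟨h0a, h0b⟩ => θ.trans' h0b (h.rel_zero_a_iff.1 h0a)⟩

theorem rel_a_b_iff (h : IsCong θ) : θ 𝐚 𝐛 ↔ θ 𝟎 𝐚 ∧ θ 𝟎 𝐛 :=
  ⟨fun hab => ⟨θ.symm' (h.meet₁_right hab 𝐚), h.meet₁_right hab 𝐛⟩,
    fun ⟨h0a, h0b⟩ => θ.trans' (θ.symm' h0a) h0b⟩

theorem ext {σ : Setoid A} (hθ : IsCong θ) (hσ : IsCong σ) (h0a : θ 𝟎 𝐚 ↔ σ 𝟎 𝐚)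
    (h0b : θ 𝟎 𝐛 ↔ σ 𝟎 𝐛) (ha1 : θ 𝐚 𝟏 ↔ σ 𝐚 𝟏) : θ = σ :=
  setoid_ext_of_pairs h0a h0b
    (by rw [hθ.rel_zero_one_iff, hσ.rel_zero_one_iff, h0a, h0b])
    (by rw [hθ.rel_a_b_iff, hσ.rel_a_b_iff, h0a, h0b]) ha1
    (by rw [← hθ.rel_zero_a_iff, ← hσ.rel_zero_a_iff, h0a])

end IsCong

theorem isCong_bot : IsCong ⊥ := by
  rintro p _ r _ rfl rfl
  exact ⟨rfl, rfl⟩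

theorem isCong_top : IsCong ⊤ :=
  fun _ _ _ _ _ _ => ⟨trivial, trivial⟩

theorem isCong_α : IsCong α := by
  rintro p q r s (hpq : p.1 = q.1) (hrs : r.1 = s.1)
  simp [meet₁, meet₂, hpq, hrs]

theorem isCong_β : IsCong β := by
  rintro p q r s (hpq : p.2 = q.2) (hrs : r.2 = s.2)
  simp [meet₁, meet₂, hpq, hrs]

theorem isCong_γ : IsCong γ := by
  rintro p q r s (⟨hp, hq⟩ | rfl) (⟨hr, hs⟩ | rfl) <;> simp [meet₁, meet₂, *]

theorem IsCong.eq_bot_or_eq_α_or_eq_β_or_eq_γ_or_eq_top {θ : Setoid A} (h : IsCong θ) :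
    θ = ⊥ ∨ θ = α ∨ θ = β ∨ θ = γ ∨ θ = ⊤ := by
  by_cases h0a : θ 𝟎 𝐚 <;> by_cases h0b : θ 𝟎 𝐛
  · have ha1 := h.rel_a_one_of_rel_zero_a_of_rel_zero_b h0a h0b
    exact .inr <| .inr <| .inr <| .inr <| h.ext isCong_top (by simp [h0a]) (by simp [h0b])
      (by simp [ha1])
  · have ha1 : ¬ θ 𝐚 𝟏 := fun ha1 => h0b (h.rel_zero_b_of_rel_a_one ha1)
    exact .inr <| .inr <| .inl <| h.ext isCong_β (by simp [h0a]) (by simp [h0b]) (by simp [ha1])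
  · by_cases ha1 : θ 𝐚 𝟏
    · exact .inr <| .inl <| h.ext isCong_α (by simp [h0a]) (by simp [h0b]) (by simp [ha1])
    · exact .inr <| .inr <| .inr <| .inl <|
        h.ext isCong_γ (by simp [h0a]) (by simp [h0b]) (by simp [ha1])
  · have ha1 : ¬ θ 𝐚 𝟏 := fun ha1 => h0b (h.rel_zero_b_of_rel_a_one ha1)
    exact .inl <| h.ext isCong_bot (by simp [h0a]) (by simp [h0b]) (by simp [ha1])

theorem γ_le_α : γ ≤ α := by
  rintro p q (⟨hp, hq⟩ | rfl)
  exacts [hp.trans hq.symm, rfl]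

theorem α_inf_β : α ⊓ β = ⊥ :=
  eq_bot_iff.2 fun _ _ h => Prod.ext h.1 h.2

theorem γ_inf_β : γ ⊓ β = ⊥ :=
  le_bot_iff.1 (α_inf_β ▸ inf_le_inf_right β γ_le_α)

theorem α_sup_β : α ⊔ β = ⊤ :=
  Setoid.sup_eq_top_of_forall_exists fun p q => ⟨(q.1, p.2), q, rfl, rfl, rfl⟩

theorem γ_sup_β : γ ⊔ β = ⊤ :=
  Setoid.sup_eq_top_of_forall_exists fun p q => ⟨(false, p.2), (false, q.2), rfl, by simp, rfl⟩

theorem setOf_isCong : {θ : Setoid A | IsCong θ} = {⊥, α, β, γ, ⊤} := by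
  ext θ
  simp only [Set.mem_ofPred_eq, Set.mem_insert_iff, Set.mem_singleton_iff]
  refine ⟨IsCong.eq_bot_or_eq_α_or_eq_β_or_eq_γ_or_eq_top, ?_⟩
  rintro (rfl | rfl | rfl | rfl | rfl)
  exacts [isCong_bot, isCong_α, isCong_β, isCong_γ, isCong_top]

/-- The congruence lattice of the bisemilattice `S × L` is the pentagon `N₅`: its
congruences are exactly `⊥, α, β, γ, ⊤`, with `γ < α`, `γ ∥ β`, `α ∥ β`,
`α ⊓ β = ⊥`, `α ⊔ β = ⊤`, `γ ⊔ β = ⊤` and `γ ⊓ β = ⊥`. -/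
theorem stmt_18 :
    {θ : Setoid A | IsCong θ} = {⊥, α, β, γ, ⊤} ∧
      γ < α ∧ ¬ γ ≤ β ∧ ¬ β ≤ γ ∧ ¬ α ≤ β ∧ ¬ β ≤ α ∧
      α ⊓ β = ⊥ ∧ α ⊔ β = ⊤ ∧ γ ⊔ β = ⊤ ∧ γ ⊓ β = ⊥ :=
  ⟨setOf_isCong, lt_of_le_not_ge γ_le_α (Setoid.not_le_of_rel (x := 𝐚) (y := 𝟏) rfl (by simp)),
    Setoid.not_le_of_rel (x := 𝟎) (y := 𝐛) (by simp) (by simp),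
    Setoid.not_le_of_rel (x := 𝟎) (y := 𝐚) rfl (by simp),
    Setoid.not_le_of_rel (x := 𝟎) (y := 𝐛) rfl (by simp),
    Setoid.not_le_of_rel (x := 𝟎) (y := 𝐚) rfl (by simp),
    α_inf_β, α_sup_β, γ_sup_β, γ_inf_β⟩

end Stmt18
end
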